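/- arXiv:2101.01633 — 2 statements merged into one kernel-verified Lean document; each statement's English description precedes it below -/
import Mathlib

section
/- Let G be a group of particles in ℝ³ with total weight ρ > 0, drift velocity V, pressure tensor P with three positive eigenvalues λ₁, λ₂, λ₃ and orthonormal eigenvectors Θ₁, Θ₂, Θ₃ chosen so that q̂_i = Θ_iᵀ q > 0, where q is the central heat flux. Define γ_i = (√ρ q̂_i)/(√3 λ_i^{3/2}) + √(1 + ρ q̂_i²/(3 λ_i³)), and the six particles ṽ_i = V + γ_i √(3λ_i/ρ) Θ_i with g̃_i = (ρ/3)/(1+γ_i²), and ṽ_{i+3} = V − (1/γ_i)√(3λ_i/ρ) Θ_i with g̃_{i+3} = (ρ/3)γ_i²/(1+γ_i²), for i = 1,2,3. Then the reduced six-particle system has the same total weight ρ, momentum ρV, pressure tensor P, and central heat flux q as G. -/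
/-!
The six particles form three pairs, the `i`-th on the line `V + ℝ Θᵢ`, at `V + γ c Θᵢ` and
`V - (c / γ) Θᵢ` with `c = √(3 λᵢ / ρ)`. Weights in the ratio `1 : γ²` with sum `ρ / 3` cancel
the first moment of the pair, and its second and third moments along `Θᵢ` are `(ρ / 3) c² = λᵢ`
and `(ρ / 3) c³ (γ - 1 / γ)`. Since `γ` is the positive root of `γ² - 2 s γ - 1 = 0` with
`s = √ρ q̂ᵢ / (√3 λᵢ^{3/2})`, we get `γ - 1 / γ = 2 s` and the third moment is `2 q̂ᵢ`. Summing
over `i` gives `P` through its spectral decomposition and `q = ∑ q̂ᵢ Θᵢ` through the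
completeness of the orthonormal basis `Θ`.
-/

open Matrix Finset

theorem sum_dotProduct_smul_of_orthonormal {n : Type*} [Fintype n] [DecidableEq n]
    (Θ : n → n → ℝ) (hΘ : ∀ i j, Θ i ⬝ᵥ Θ j = if i = j then (1 : ℝ) else 0) (q : n → ℝ) :
    ∑ i, (Θ i ⬝ᵥ q) • Θ i = q := by
  have hrows : of Θ * (of Θ)ᵀ = 1 := by
    ext i j
    simpa [mul_apply, dotProduct, one_apply] using hΘ i j
  calc ∑ i, (Θ i ⬝ᵥ q) • Θ i = (of Θ)ᵀ *ᵥ (of Θ *ᵥ q) := by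
        rw [mulVec_transpose, vecMul_eq_sum]; rfl
    _ = q := by rw [mulVec_mulVec, mul_eq_one_comm.mp hrows, one_mulVec]

theorem rpow_three_div_two_eq_mul_sqrt {x : ℝ} (hx : 0 ≤ x) : x ^ ((3 : ℝ) / 2) = x * √x := by
  rw [show (3 : ℝ) / 2 = 1 + 1 / 2 by norm_num, Real.rpow_add' hx (by norm_num), Real.rpow_one,
    Real.sqrt_eq_rpow]

theorem sq_div_rpow_three_div_two (ρ l qh : ℝ) (hρ : 0 ≤ ρ) (hl : 0 ≤ l) :
    (√ρ * qh / (√3 * l ^ ((3 : ℝ) / 2))) ^ 2 = ρ * qh ^ 2 / (3 * l ^ 3) := by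
  rw [rpow_three_div_two_eq_mul_sqrt hl, div_pow, mul_pow, mul_pow, mul_pow, Real.sq_sqrt hρ,
    Real.sq_sqrt (by norm_num), Real.sq_sqrt hl]
  ring

theorem div_three_mul_sqrt_pow_three (ρ l : ℝ) (hρ : 0 < ρ) (hl : 0 < l) :
    ρ / 3 * √(3 * l / ρ) ^ 3 = √3 * l ^ ((3 : ℝ) / 2) / √ρ := by
  rw [rpow_three_div_two_eq_mul_sqrt hl.le, Real.sqrt_div' _ hρ.le, Real.sqrt_mul (by norm_num)]
  have h3 := Real.sq_sqrt (show (0:ℝ) ≤ 3 by norm_num)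
  have hρ' := Real.sq_sqrt hρ.le
  have hl' := Real.sq_sqrt hl.le
  have : 0 < √ρ := Real.sqrt_pos.mpr hρ
  field_simp
  rw [h3, hρ', hl']
  ring

theorem add_sqrt_one_add_sq_pos (s : ℝ) : 0 < s + √(1 + s ^ 2) := by
  have : |s| < √(1 + s ^ 2) := by
    rw [Real.lt_sqrt (abs_nonneg s), sq_abs]; linarith
  linarith [neg_abs_le s]

theorem inv_add_sqrt_one_add_sq (s : ℝ) : (s + √(1 + s ^ 2))⁻¹ = √(1 + s ^ 2) - s := by
  rw [inv_eq_of_mul_eq_one_right]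
  nlinarith [Real.sq_sqrt (show 0 ≤ 1 + s ^ 2 by positivity)]

theorem add_sqrt_one_add_sq_sub_one_div (s : ℝ) :
    s + √(1 + s ^ 2) - 1 / (s + √(1 + s ^ 2)) = 2 * s := by
  rw [one_div, inv_add_sqrt_one_add_sq]
  ring

theorem gamma_pos_and_third_moment_eq (ρ l qh γ : ℝ) (hρ : 0 < ρ) (hl : 0 < l)
    (hγ : γ = √ρ * qh / (√3 * l ^ ((3 : ℝ) / 2)) + √(1 + ρ * qh ^ 2 / (3 * l ^ 3))) :
    0 < γ ∧ ρ / 3 * √(3 * l / ρ) ^ 3 * (γ - 1 / γ) = 2 * qh := by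
  rw [← sq_div_rpow_three_div_two ρ l qh hρ.le hl.le] at hγ
  subst hγ
  refine ⟨add_sqrt_one_add_sq_pos _, ?_⟩
  rw [add_sqrt_one_add_sq_sub_one_div, div_three_mul_sqrt_pow_three ρ l hρ hl]
  have : 0 < √ρ := Real.sqrt_pos.mpr hρ
  have : 0 < √3 := Real.sqrt_pos.mpr (by norm_num)
  have : 0 < l ^ ((3 : ℝ) / 2) := Real.rpow_pos_of_pos hl _
  field_simp

section ParticlePair

variable {n : Type*} (a γ c : ℝ) (V θ : n → ℝ)

theorem pair_weight_sum : a * (1 / (1 + γ ^ 2)) + a * (γ ^ 2 / (1 + γ ^ 2)) = a := by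
  field_simp

theorem pair_momentum (hγ : γ ≠ 0) :
    (a * (1 / (1 + γ ^ 2))) • (V + (γ * c) • θ)
      + (a * (γ ^ 2 / (1 + γ ^ 2))) • (V - (1 / γ * c) • θ) = a • V := by
  have : 1 + γ ^ 2 ≠ 0 := by positivity
  ext x
  simp only [Pi.add_apply, Pi.sub_apply, Pi.smul_apply, smul_eq_mul]
  field_simp
  ring

theorem pair_pressure (hγ : γ ≠ 0) :
    (a * (1 / (1 + γ ^ 2))) • vecMulVec (V + (γ * c) • θ - V) (V + (γ * c) • θ - V)
      + (a * (γ ^ 2 / (1 + γ ^ 2)))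
        • vecMulVec (V - (1 / γ * c) • θ - V) (V - (1 / γ * c) • θ - V)
      = (a * c ^ 2) • vecMulVec θ θ := by
  have : 1 + γ ^ 2 ≠ 0 := by positivity
  ext x y
  simp only [add_sub_cancel_left, sub_sub_cancel_left, Matrix.add_apply, Matrix.smul_apply,
    vecMulVec_apply, Pi.neg_apply, Pi.smul_apply, smul_eq_mul]
  field_simp
  ring

theorem pair_heat_flux [Fintype n] (hγ : γ ≠ 0) (hθ : θ ⬝ᵥ θ = 1) :
    (a * (1 / (1 + γ ^ 2)) * ∑ x, ((V + (γ * c) • θ) x - V x) ^ 2) • (V + (γ * c) • θ - V)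
      + (a * (γ ^ 2 / (1 + γ ^ 2)) * ∑ x, ((V - (1 / γ * c) • θ) x - V x) ^ 2)
        • (V - (1 / γ * c) • θ - V)
      = (a * c ^ 3 * (γ - 1 / γ)) • θ := by
  have : 1 + γ ^ 2 ≠ 0 := by positivity
  have hsq : ∀ d : ℝ, ∑ x, (d * θ x) ^ 2 = d ^ 2 := fun d => by
    rw [← mul_one (d ^ 2), ← hθ, dotProduct, mul_sum]
    exact sum_congr rfl fun x _ => by ring
  ext x
  simp only [Pi.add_apply, Pi.sub_apply, Pi.smul_apply, smul_eq_mul, add_sub_cancel_left,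
    sub_sub_cancel_left, Pi.neg_apply, neg_sq, hsq]
  field_simp
  ring

end ParticlePair

theorem six_particle_reduction_conserves_moments_general
    (ρ : ℝ) (hρ : 0 < ρ)
    (V : Fin 3 → ℝ)
    (P : Matrix (Fin 3) (Fin 3) ℝ)
    (q : Fin 3 → ℝ)
    -- spectral data of P: positive eigenvalues and orthonormal eigenvectors
    (lam : Fin 3 → ℝ) (hlam : ∀ i, 0 < lam i)
    (Θ : Fin 3 → Fin 3 → ℝ)
    (hortho : ∀ i j, Θ i ⬝ᵥ Θ j = if i = j then (1:ℝ) else 0)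
    (hspec : P = ∑ i, lam i • vecMulVec (Θ i) (Θ i))
    -- the eigenvectors are oriented so that q̂_i = Θ_iᵀ q > 0
    (qh : Fin 3 → ℝ) (hqh : ∀ i, qh i = Θ i ⬝ᵥ q)
    -- parameters of the scheme
    (γ : Fin 3 → ℝ)
    (hγ : ∀ i, γ i = (Real.sqrt ρ * qh i) / (Real.sqrt 3 * (lam i) ^ ((3:ℝ)/2))
        + Real.sqrt (1 + ρ * (qh i)^2 / (3 * (lam i)^3)))
    -- the six reduced particles (as three pairs)
    (tg1 tg2 : Fin 3 → ℝ) (tv1 tv2 : Fin 3 → Fin 3 → ℝ)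
    (htg1 : ∀ i, tg1 i = (ρ/3) * (1 / (1 + (γ i)^2)))
    (htg2 : ∀ i, tg2 i = (ρ/3) * ((γ i)^2 / (1 + (γ i)^2)))
    (htv1 : ∀ i, tv1 i = V + (γ i * Real.sqrt (3 * lam i / ρ)) • Θ i)
    (htv2 : ∀ i, tv2 i = V - ((1 / γ i) * Real.sqrt (3 * lam i / ρ)) • Θ i) :
    -- total weight
    (∑ i, (tg1 i + tg2 i) = ρ) ∧
    -- momentum
    (∑ i, (tg1 i • tv1 i + tg2 i • tv2 i) = ρ • V) ∧
    -- pressure tensor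
    (∑ i, (tg1 i • vecMulVec (tv1 i - V) (tv1 i - V)
         + tg2 i • vecMulVec (tv2 i - V) (tv2 i - V)) = P) ∧
    -- central heat flux
    ((1/2 : ℝ) • ∑ i, ((tg1 i * ∑ a, (tv1 i a - V a)^2) • (tv1 i - V)
         + (tg2 i * ∑ a, (tv2 i a - V a)^2) • (tv2 i - V)) = q) := by
  have hscheme i :=
    gamma_pos_and_third_moment_eq ρ (lam i) (qh i) (γ i) hρ (hlam i) (hγ i)
  have hγ0 i : γ i ≠ 0 := (hscheme i).1.ne'
  have hsecond i : ρ / 3 * √(3 * lam i / ρ) ^ 2 = lam i := by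
    rw [Real.sq_sqrt (div_pos (mul_pos three_pos (hlam i)) hρ).le]
    field_simp
  simp only [htg1, htg2, htv1, htv2, pair_weight_sum, pair_momentum _ _ _ _ _ (hγ0 _),
    pair_pressure _ _ _ _ _ (hγ0 _),
    pair_heat_flux _ _ _ _ _ (hγ0 _) ((hortho _ _).trans (if_pos rfl)), (hscheme _).2, hsecond]
  refine ⟨?_, ?_, hspec.symm, ?_⟩
  · rw [sum_const, card_univ, Fintype.card_fin, nsmul_eq_mul]
    ring
  · rw [sum_const, card_univ, Fintype.card_fin, ← Nat.cast_smul_eq_nsmul ℝ, smul_smul]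
    congr 1
    ring
  · rw [smul_sum]
    conv_rhs => rw [← sum_dotProduct_smul_of_orthonormal Θ hortho q]
    exact sum_congr rfl fun i _ => by
      rw [smul_smul, hqh]
      congr 1
      ring

/-- the six-particle reduction of the pressure-tensor-and-heat-flux
scheme conserves the total weight, momentum, pressure tensor and central heat
flux of the group. -/
theorem six_particle_reduction_conserves_moments
    (m : ℕ) (g : Fin m → ℝ) (v : Fin m → Fin 3 → ℝ)
    (hg : ∀ i, 0 < g i)
    (ρ : ℝ) (hρdef : ρ = ∑ i, g i) (hρ : 0 < ρ)
    (V : Fin 3 → ℝ) (hV : ∑ i, g i • v i = ρ • V)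
    (P : Matrix (Fin 3) (Fin 3) ℝ)
    (hP : P = ∑ i, g i • vecMulVec (v i - V) (v i - V))
    (q : Fin 3 → ℝ)
    (hq : q = (1/2 : ℝ) • ∑ i, (g i * ∑ a, (v i a - V a)^2) • (v i - V))
    -- spectral data of P: positive eigenvalues and orthonormal eigenvectors
    (lam : Fin 3 → ℝ) (hlam : ∀ i, 0 < lam i)
    (Θ : Fin 3 → Fin 3 → ℝ)
    (hortho : ∀ i j, Θ i ⬝ᵥ Θ j = if i = j then (1:ℝ) else 0)
    (hspec : P = ∑ i, lam i • vecMulVec (Θ i) (Θ i))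
    -- the eigenvectors are oriented so that q̂_i = Θ_iᵀ q > 0
    (qh : Fin 3 → ℝ) (hqh : ∀ i, qh i = Θ i ⬝ᵥ q) (hqhpos : ∀ i, 0 < qh i)
    -- parameters of the scheme
    (γ : Fin 3 → ℝ)
    (hγ : ∀ i, γ i = (Real.sqrt ρ * qh i) / (Real.sqrt 3 * (lam i) ^ ((3:ℝ)/2))
        + Real.sqrt (1 + ρ * (qh i)^2 / (3 * (lam i)^3)))
    -- the six reduced particles (as three pairs)
    (tg1 tg2 : Fin 3 → ℝ) (tv1 tv2 : Fin 3 → Fin 3 → ℝ)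
    (htg1 : ∀ i, tg1 i = (ρ/3) * (1 / (1 + (γ i)^2)))
    (htg2 : ∀ i, tg2 i = (ρ/3) * ((γ i)^2 / (1 + (γ i)^2)))
    (htv1 : ∀ i, tv1 i = V + (γ i * Real.sqrt (3 * lam i / ρ)) • Θ i)
    (htv2 : ∀ i, tv2 i = V - ((1 / γ i) * Real.sqrt (3 * lam i / ρ)) • Θ i) :
    -- total weight
    (∑ i, (tg1 i + tg2 i) = ρ) ∧
    -- momentum
    (∑ i, (tg1 i • tv1 i + tg2 i • tv2 i) = ρ • V) ∧
    -- pressure tensor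
    (∑ i, (tg1 i • vecMulVec (tv1 i - V) (tv1 i - V)
         + tg2 i • vecMulVec (tv2 i - V) (tv2 i - V)) = P) ∧
    -- central heat flux
    ((1/2 : ℝ) • ∑ i, ((tg1 i * ∑ a, (tv1 i a - V a)^2) • (tv1 i - V)
         + (tg2 i * ∑ a, (tv2 i a - V a)^2) • (tv2 i - V)) = q) :=
  six_particle_reduction_conserves_moments_general ρ hρ V P q lam hlam Θ hortho hspec qh hqh γ hγ
    tg1 tg2 tv1 tv2 htg1 htg2 htv1 htv2
end

section
/- Let φ : ℝ³ → ℝ be bounded and Lipschitz with ‖φ‖_L = max{‖φ‖_∞, Lip(φ)}. For a group with particles (g_i, v_i), i = 1,…,m, total weight ρ = Σ g_i, drift V, temperature T with 3ρT = Σ g_i |v_i − V|², and reduced particles (g̃_j, ṽ_j), j = 1,…,6, given by the pressure-tensor-and-heat-flux scheme, one has |Σ_j g̃_j φ(ṽ_j) − Σ_i g_i φ(v_i)| ≤ ‖φ‖_L [Σ_i g_i |V − v_i| + ρ √(3T)]. -/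
/-!
Inserting `φ V` splits the error into the Lipschitz errors of the original particles and of the
reduced particles about the drift `V`. The first is `Σ_i g_i |V - v_i|` times `L`; for the second,
Cauchy–Schwarz with weights `g̃_j` bounds `Σ_j g̃_j |ṽ_j - V|` by
`√(Σ_j g̃_j · Σ_j g̃_j |ṽ_j - V|²) = √(ρ · 3ρT) = ρ √(3T)`.
-/

open Finset

lemma nonneg_of_abs_sub_le_mul_norm {E : Type*} [NormedAddCommGroup E] [Nontrivial E]
    {φ : E → ℝ} {L : ℝ} (hφ : ∀ x y, |φ x - φ y| ≤ L * ‖x - y‖) : 0 ≤ L := by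
  obtain ⟨x, hx⟩ := exists_ne (0 : E)
  have h : 0 ≤ L * ‖x - 0‖ := (abs_nonneg _).trans (hφ x 0)
  rw [sub_zero] at h
  exact nonneg_of_mul_nonneg_left h (norm_pos_iff.mpr hx)

lemma abs_sum_mul_sub_le_mul_sum_mul_norm {ι E : Type*} [SeminormedAddCommGroup E]
    {φ : E → ℝ} {L : ℝ} (hφ : ∀ x y, |φ x - φ y| ≤ L * ‖x - y‖)
    (s : Finset ι) {w : ι → ℝ} (hw : ∀ i ∈ s, 0 ≤ w i) (x y : ι → E) :
    |∑ i ∈ s, w i * (φ (x i) - φ (y i))| ≤ L * ∑ i ∈ s, w i * ‖x i - y i‖ := by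
  rw [mul_sum]
  refine (abs_sum_le_sum_abs _ _).trans (sum_le_sum fun i hi => ?_)
  rw [abs_mul, abs_of_nonneg (hw i hi), mul_left_comm]
  exact mul_le_mul_of_nonneg_left (hφ _ _) (hw i hi)

lemma sum_mul_le_sqrt_sum_mul_sum_mul_sq {ι : Type*} (s : Finset ι) {w : ι → ℝ}
    (hw : ∀ i ∈ s, 0 ≤ w i) (a : ι → ℝ) :
    ∑ i ∈ s, w i * a i ≤ √((∑ i ∈ s, w i) * ∑ i ∈ s, w i * a i ^ 2) := by
  refine (le_abs_self _).trans (Real.abs_le_sqrt ?_)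
  exact sum_sq_le_sum_mul_sum_of_sq_le_mul s hw
    (fun i hi => mul_nonneg (hw i hi) (sq_nonneg _)) fun i _ => le_of_eq (by ring)

theorem reduction_scheme_convergence_inequality_general
    (φ : EuclideanSpace ℝ (Fin 3) → ℝ) (L : ℝ)
    (hφlip : ∀ x y, |φ x - φ y| ≤ L * ‖x - y‖)
    (m : ℕ) (g : Fin m → ℝ) (v : Fin m → EuclideanSpace ℝ (Fin 3))
    (hg : ∀ i, 0 < g i)
    (ρ : ℝ) (hρdef : ρ = ∑ i, g i)
    (V : EuclideanSpace ℝ (Fin 3))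
    (T : ℝ)
    -- the six reduced particles of the pressure-tensor-and-heat-flux scheme:
    -- each moves relative to V, they carry the total weight ρ and reproduce
    -- the temperature, Σ_j g̃_j |ṽ_j − V|² = 3ρT
    (tg : Fin 6 → ℝ) (tv : Fin 6 → EuclideanSpace ℝ (Fin 3))
    (htg : ∀ j, 0 < tg j)
    (htgsum : ∑ j, tg j = ρ)
    (htemp : ∑ j, tg j * ‖tv j - V‖^2 = 3 * ρ * T) :
    |(∑ j, tg j * φ (tv j)) - ∑ i, g i * φ (v i)|
      ≤ L * ((∑ i, g i * ‖V - v i‖) + ρ * Real.sqrt (3 * T)) := by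
  have hL : 0 ≤ L := nonneg_of_abs_sub_le_mul_norm hφlip
  have hρ : 0 ≤ ρ := htgsum ▸ sum_nonneg fun j _ => (htg j).le
  have hsplit : (∑ j, tg j * φ (tv j)) - ∑ i, g i * φ (v i)
      = (∑ j, tg j * (φ (tv j) - φ V)) + ∑ i, g i * (φ V - φ (v i)) := by
    simp only [mul_sub, sum_sub_distrib, ← sum_mul, htgsum, ← hρdef]
    ring
  have hreduced : ∑ j, tg j * ‖tv j - V‖ ≤ ρ * √(3 * T) :=
    calc ∑ j, tg j * ‖tv j - V‖
        ≤ √((∑ j, tg j) * ∑ j, tg j * ‖tv j - V‖ ^ 2) :=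
          sum_mul_le_sqrt_sum_mul_sum_mul_sq _ (fun j _ => (htg j).le) _
      _ = ρ * √(3 * T) := by
          rw [htgsum, htemp, show ρ * (3 * ρ * T) = ρ ^ 2 * (3 * T) by ring,
            Real.sqrt_mul (sq_nonneg ρ), Real.sqrt_sq hρ]
  have hreducedErr := abs_sum_mul_sub_le_mul_sum_mul_norm hφlip univ
    (fun j _ => (htg j).le) tv fun _ => V
  have horigErr := abs_sum_mul_sub_le_mul_sum_mul_norm hφlip univ
    (fun i _ => (hg i).le) (fun _ => V) v
  calc |(∑ j, tg j * φ (tv j)) - ∑ i, g i * φ (v i)|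
      ≤ L * ∑ j, tg j * ‖tv j - V‖ + L * ∑ i, g i * ‖V - v i‖ :=
        hsplit ▸ (abs_add_le _ _).trans (add_le_add hreducedErr horigErr)
    _ ≤ L * ((∑ i, g i * ‖V - v i‖) + ρ * √(3 * T)) := by
        linarith [mul_le_mul_of_nonneg_left hreduced hL]

/-- the convergence-theorem inequality for the
pressure-tensor-and-heat-flux reduction scheme:
|Σ_j g̃_j φ(ṽ_j) − Σ_i g_i φ(v_i)| ≤ ‖φ‖_L [Σ_i g_i |V − v_i| + ρ√(3T)],
for φ bounded and Lipschitz with ‖φ‖_L = max{‖φ‖_∞, Lip(φ)}. -/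
theorem reduction_scheme_convergence_inequality
    (φ : EuclideanSpace ℝ (Fin 3) → ℝ) (L : ℝ)
    (hφbdd : ∀ x, |φ x| ≤ L)
    (hφlip : ∀ x y, |φ x - φ y| ≤ L * ‖x - y‖)
    (m : ℕ) (g : Fin m → ℝ) (v : Fin m → EuclideanSpace ℝ (Fin 3))
    (hg : ∀ i, 0 < g i)
    (ρ : ℝ) (hρdef : ρ = ∑ i, g i) (hρ : 0 < ρ)
    (V : EuclideanSpace ℝ (Fin 3)) (hV : ∑ i, g i • v i = ρ • V)
    (T : ℝ) (hT : 3 * ρ * T = ∑ i, g i * ‖v i - V‖^2)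
    -- the six reduced particles of the pressure-tensor-and-heat-flux scheme:
    -- each moves relative to V, they carry the total weight ρ and reproduce
    -- the temperature, Σ_j g̃_j |ṽ_j − V|² = 3ρT
    (tg : Fin 6 → ℝ) (tv : Fin 6 → EuclideanSpace ℝ (Fin 3))
    (htg : ∀ j, 0 < tg j)
    (htgsum : ∑ j, tg j = ρ)
    (htemp : ∑ j, tg j * ‖tv j - V‖^2 = 3 * ρ * T) :
    |(∑ j, tg j * φ (tv j)) - ∑ i, g i * φ (v i)|
      ≤ L * ((∑ i, g i * ‖V - v i‖) + ρ * Real.sqrt (3 * T)) :=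
  reduction_scheme_convergence_inequality_general φ L hφlip m g v hg ρ hρdef V T tg tv htg htgsum
    htemp
end
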